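/- Under the model rollout setup, let f : S × A → S be a differentiable ‘true dynamics’ map with ‖D_s f(s,a)‖ ≤ L_f and ‖D_a f(s,a)‖ ≤ L_f for all (s,a), and let (s_i, a_i) be the rollout generated from the same constant initial state s₀ and the same policy π, but with f in place of f̂. Suppose ε_f ≥ 0 satisfies, for every i ≥ 1 and every θ, ‖D_s f̂(ŝ_{i−1}(θ), â_{i−1}(θ)) − D_s f(s_{i−1}(θ), a_{i−1}(θ))‖ + ‖D_a f̂(ŝ_{i−1}(θ), â_{i−1}(θ)) − D_a f(s_{i−1}(θ), a_{i−1}(θ))‖ ≤ ε_f. Then for every i ≥ 1 and θ, ‖D_θ ŝ_i(θ) − D_θ s_i(θ)‖ ≤ ( (ε_f + 2·L_f·L_π)·K̂(i−1) + 2·L_f·L_θ ) · ∑_{j=0}^{i−1} M_f^j, where M_f = L_f·(1 + L_π) and K̂(i) = (1 + L_π)·L_f̂·L_θ·∑_{j=0}^{i−1} (L_f̂(1+L_π))^j + L_θ. -/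

import Mathlib

/-!
Differentiating the rollout recursion gives
`D ŝ_{i+1} = D_s f̂ ∘ D ŝ_i + D_a f̂ ∘ D â_i` and `D â_i = D_θ π + D_s π ∘ D ŝ_i`.
Subtracting the same identities for `f`, and splitting every difference of composites as
`A' B' - A B = (A' - A) B' + A (B' - B)`, the error `e_i = ‖D ŝ_i - D s_i‖` satisfies
`e_{i+1} ≤ M_f e_i + (ε_f + 2 L_f L_π) K̂(i) + 2 L_f L_θ`, where `K̂(i)` bounds both `‖D ŝ_i‖`
and `‖D â_i‖`. Since `e_0 = 0` and the forcing term is monotone in `i`, unrolling this linear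
recursion gives the geometric-sum bound.
-/

open Finset

/-- Model rollout: states `ŝ_i : Θ → S` generated from the constant initial state `s₀`
by `ŝ₀(θ) = s₀`, `ŝ_{i+1}(θ) = f(ŝ_i(θ), π(θ, ŝ_i(θ)))`. -/
def sHat {Θ S A : Type*} (π : Θ × S → A) (f : S × A → S) (s₀ : S) : ℕ → Θ → S
  | 0 => fun _ => s₀
  | (i + 1) => fun θ => f (sHat π f s₀ i θ, π (θ, sHat π f s₀ i θ))

/-- Model rollout: actions `â_i(θ) = π(θ, ŝ_i(θ))`. -/
def aHat {Θ S A : Type*} (π : Θ × S → A) (f : S × A → S) (s₀ : S) (i : ℕ) : Θ → A :=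
  fun θ => π (θ, sHat π f s₀ i θ)

/-- `K̂(i) = (1 + L_π) · L_f̂ · L_θ · ∑_{j=0}^{i−1} (L_f̂ (1 + L_π))^j + L_θ`. -/
noncomputable def Khat (Lπ Lf Lθ : ℝ) (i : ℕ) : ℝ :=
  (1 + Lπ) * Lf * Lθ * ∑ j ∈ Finset.range i, (Lf * (1 + Lπ)) ^ j + Lθ

theorem le_mul_geom_sum_of_le_mul_add {d C : ℕ → ℝ} {M : ℝ} (hM : 0 ≤ M) (hC : Monotone C)
    (h₀ : d 0 ≤ 0) (hstep : ∀ n, d (n + 1) ≤ M * d n + C n) :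
    ∀ n, d n ≤ C (n - 1) * ∑ j ∈ range n, M ^ j := by
  intro n
  induction n with
  | zero => simpa using h₀
  | succ n ih =>
    have hS : 0 ≤ M * ∑ j ∈ range n, M ^ j :=
      mul_nonneg hM (sum_nonneg fun j _ => pow_nonneg hM j)
    have hCn : C (n - 1) ≤ C n := hC (Nat.sub_le n 1)
    calc d (n + 1) ≤ M * (C (n - 1) * ∑ j ∈ range n, M ^ j) + C n :=
          (hstep n).trans (by gcongr)
      _ ≤ M * (C n * ∑ j ∈ range n, M ^ j) + C n := by nlinarith
      _ = C (n + 1 - 1) * ∑ j ∈ range (n + 1), M ^ j := by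
          rw [Nat.add_sub_cancel, geom_sum_succ]; ring

theorem monotone_Khat {Lπ Lf Lθ : ℝ} (hπ : 0 ≤ 1 + Lπ) (hf : 0 ≤ Lf) (hθ : 0 ≤ Lθ) :
    Monotone (Khat Lπ Lf Lθ) := by
  refine monotone_nat_of_le_succ fun n => ?_
  have : 0 ≤ (1 + Lπ) * Lf * Lθ * (Lf * (1 + Lπ)) ^ n := by positivity
  simp only [Khat, sum_range_succ]
  nlinarith

namespace ContinuousLinearMap

variable {𝕜 E F G : Type*} [NontriviallyNormedField 𝕜]
  [NormedAddCommGroup E] [NormedSpace 𝕜 E] [NormedAddCommGroup F] [NormedSpace 𝕜 F]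
  [NormedAddCommGroup G] [NormedSpace 𝕜 G]

theorem opNorm_comp_le_of_le {A : F →L[𝕜] G} {B : E →L[𝕜] F} {a b : ℝ} (hA : ‖A‖ ≤ a)
    (hB : ‖B‖ ≤ b) : ‖A.comp B‖ ≤ a * b :=
  (opNorm_comp_le A B).trans (mul_le_mul hA hB (norm_nonneg B) ((norm_nonneg A).trans hA))

theorem norm_comp_sub_comp_le (A' A : F →L[𝕜] G) (B' B : E →L[𝕜] F) :
    ‖A'.comp B' - A.comp B‖ ≤ ‖A' - A‖ * ‖B'‖ + ‖A‖ * ‖B' - B‖ := by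
  have : A'.comp B' - A.comp B = (A' - A).comp B' + A.comp (B' - B) := by
    simp only [sub_comp, comp_sub]; abel
  rw [this]
  exact (norm_add_le _ _).trans (add_le_add (opNorm_comp_le _ _) (opNorm_comp_le _ _))

end ContinuousLinearMap

section ChainRule

variable {𝕜 E F G H : Type*} [NontriviallyNormedField 𝕜]
  [NormedAddCommGroup E] [NormedSpace 𝕜 E] [NormedAddCommGroup F] [NormedSpace 𝕜 F]
  [NormedAddCommGroup G] [NormedSpace 𝕜 G] [NormedAddCommGroup H] [NormedSpace 𝕜 H]

theorem DifferentiableAt.hasFDerivAt_comp_prodMk {f : F × G → H} {g : E → F} {h : E → G}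
    {x : E} {g' : E →L[𝕜] F} {h' : E →L[𝕜] G} (hf : DifferentiableAt 𝕜 f (g x, h x))
    (hg : HasFDerivAt g g' x) (hh : HasFDerivAt h h' x) :
    HasFDerivAt (fun x => f (g x, h x))
      ((fderiv 𝕜 (fun a => f (a, h x)) (g x)).comp g' +
        (fderiv 𝕜 (fun b => f (g x, b)) (h x)).comp h') x := by
  have ha : HasFDerivAt (fun a => f (a, h x)) _ (g x) :=
    hf.hasFDerivAt.comp (g x) (hasFDerivAt_prodMk_left (g x) (h x))
  have hb : HasFDerivAt (fun b => f (g x, b)) _ (h x) :=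
    hf.hasFDerivAt.comp (h x) (hasFDerivAt_prodMk_right (g x) (h x))
  rw [ha.fderiv, hb.fderiv]
  refine (hf.hasFDerivAt.comp x (hg.prodMk hh)).congr_fderiv ?_
  ext v
  simp [← map_add]

end ChainRule

section Rollout

variable {𝕜 Θ S A : Type*} [NontriviallyNormedField 𝕜]
  [NormedAddCommGroup Θ] [NormedSpace 𝕜 Θ] [NormedAddCommGroup S] [NormedSpace 𝕜 S]
  {π : Θ × S → A} {f : S × A → S} (s₀ : S)

theorem fderiv_sHat_zero (θ : Θ) : fderiv 𝕜 (sHat π f s₀ 0) θ = 0 :=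
  fderiv_const_apply s₀

variable [NormedAddCommGroup A] [NormedSpace 𝕜 A]

variable (hπ : Differentiable 𝕜 π) (hf : Differentiable 𝕜 f)
include hπ hf

theorem differentiable_sHat (i : ℕ) : Differentiable 𝕜 (sHat π f s₀ i) := by
  induction i with
  | zero => exact differentiable_const s₀
  | succ i ih => exact hf.comp (ih.prodMk (hπ.comp (differentiable_id.prodMk ih)))

theorem differentiable_aHat (i : ℕ) : Differentiable 𝕜 (aHat π f s₀ i) :=
  hπ.comp (differentiable_id.prodMk (differentiable_sHat s₀ hπ hf i))

theorem fderiv_aHat (i : ℕ) (θ : Θ) :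
    fderiv 𝕜 (aHat π f s₀ i) θ =
      fderiv 𝕜 (fun t => π (t, sHat π f s₀ i θ)) θ +
        (fderiv 𝕜 (fun s => π (θ, s)) (sHat π f s₀ i θ)).comp (fderiv 𝕜 (sHat π f s₀ i) θ) := by
  have h := (hπ _).hasFDerivAt_comp_prodMk (hasFDerivAt_id θ)
    (differentiable_sHat s₀ hπ hf i θ).hasFDerivAt
  rw [ContinuousLinearMap.comp_id] at h
  exact h.fderiv

theorem fderiv_sHat_succ (i : ℕ) (θ : Θ) :
    fderiv 𝕜 (sHat π f s₀ (i + 1)) θ =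
      (fderiv 𝕜 (fun s => f (s, aHat π f s₀ i θ)) (sHat π f s₀ i θ)).comp
          (fderiv 𝕜 (sHat π f s₀ i) θ) +
        (fderiv 𝕜 (fun a => f (sHat π f s₀ i θ, a)) (aHat π f s₀ i θ)).comp
          (fderiv 𝕜 (aHat π f s₀ i) θ) :=
  ((hf _).hasFDerivAt_comp_prodMk (differentiable_sHat s₀ hπ hf i θ).hasFDerivAt
    (differentiable_aHat s₀ hπ hf i θ).hasFDerivAt).fderiv

variable {Lθ Lπ Lf : ℝ}
  (hπθ : ∀ p : Θ × S, ‖fderiv 𝕜 (fun θ : Θ => π (θ, p.2)) p.1‖ ≤ Lθ)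
  (hπs : ∀ p : Θ × S, ‖fderiv 𝕜 (fun s : S => π (p.1, s)) p.2‖ ≤ Lπ)
include hπθ hπs

theorem norm_fderiv_aHat_le (i : ℕ) (θ : Θ) :
    ‖fderiv 𝕜 (aHat π f s₀ i) θ‖ ≤ Lθ + Lπ * ‖fderiv 𝕜 (sHat π f s₀ i) θ‖ := by
  rw [fderiv_aHat s₀ hπ hf]
  exact (norm_add_le _ _).trans
    (add_le_add (hπθ (θ, sHat π f s₀ i θ))
      (ContinuousLinearMap.opNorm_comp_le_of_le (hπs (θ, sHat π f s₀ i θ)) le_rfl))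

variable (hfs : ∀ p : S × A, ‖fderiv 𝕜 (fun s : S => f (s, p.2)) p.1‖ ≤ Lf)
  (hfa : ∀ p : S × A, ‖fderiv 𝕜 (fun a : A => f (p.1, a)) p.2‖ ≤ Lf)
include hfs hfa

theorem norm_fderiv_sHat_succ_le (i : ℕ) (θ : Θ) :
    ‖fderiv 𝕜 (sHat π f s₀ (i + 1)) θ‖ ≤
      Lf * (1 + Lπ) * ‖fderiv 𝕜 (sHat π f s₀ i) θ‖ + Lf * Lθ := by
  rw [fderiv_sHat_succ s₀ hπ hf]
  calc _ ≤ Lf * ‖fderiv 𝕜 (sHat π f s₀ i) θ‖ +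
        Lf * (Lθ + Lπ * ‖fderiv 𝕜 (sHat π f s₀ i) θ‖) :=
        (norm_add_le _ _).trans (add_le_add
          (ContinuousLinearMap.opNorm_comp_le_of_le (hfs (sHat π f s₀ i θ, aHat π f s₀ i θ))
            le_rfl)
          (ContinuousLinearMap.opNorm_comp_le_of_le (hfa (sHat π f s₀ i θ, aHat π f s₀ i θ))
            (norm_fderiv_aHat_le s₀ hπ hf hπθ hπs i θ)))
    _ = _ := by ring

theorem norm_fderiv_sHat_le (i : ℕ) (θ : Θ) :
    ‖fderiv 𝕜 (sHat π f s₀ i) θ‖ ≤ Lf * Lθ * ∑ j ∈ range i, (Lf * (1 + Lπ)) ^ j := by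
  have hLf : 0 ≤ Lf := (norm_nonneg _).trans (hfs 0)
  have hLπ : 0 ≤ Lπ := (norm_nonneg _).trans (hπs 0)
  refine le_mul_geom_sum_of_le_mul_add (d := fun i => ‖fderiv 𝕜 (sHat π f s₀ i) θ‖)
    (by positivity) monotone_const (by simp [fderiv_sHat_zero]) (fun n => ?_) i
  exact norm_fderiv_sHat_succ_le s₀ hπ hf hπθ hπs hfs hfa n θ

theorem norm_fderiv_sHat_le_Khat (i : ℕ) (θ : Θ) :
    ‖fderiv 𝕜 (sHat π f s₀ i) θ‖ ≤ Khat Lπ Lf Lθ i := by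
  have hb := norm_fderiv_sHat_le s₀ hπ hf hπθ hπs hfs hfa i θ
  have hLπ : 0 ≤ Lπ := (norm_nonneg _).trans (hπs 0)
  have hLθ : 0 ≤ Lθ := (norm_nonneg _).trans (hπθ 0)
  have : 0 ≤ Lπ * ‖fderiv 𝕜 (sHat π f s₀ i) θ‖ := by positivity
  rw [Khat]
  nlinarith

theorem norm_fderiv_aHat_le_Khat (i : ℕ) (θ : Θ) :
    ‖fderiv 𝕜 (aHat π f s₀ i) θ‖ ≤ Khat Lπ Lf Lθ i := by
  have ha := norm_fderiv_aHat_le s₀ hπ hf hπθ hπs i θ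
  have hb := norm_fderiv_sHat_le s₀ hπ hf hπθ hπs hfs hfa i θ
  have hLπ : 0 ≤ Lπ := (norm_nonneg _).trans (hπs 0)
  rw [Khat]
  nlinarith [norm_nonneg (fderiv 𝕜 (sHat π f s₀ i) θ)]

end Rollout

section RolloutComparison

variable {𝕜 Θ S A : Type*} [NontriviallyNormedField 𝕜]
  [NormedAddCommGroup Θ] [NormedSpace 𝕜 Θ] [NormedAddCommGroup S] [NormedSpace 𝕜 S]
  [NormedAddCommGroup A] [NormedSpace 𝕜 A]
  {π : Θ × S → A} {fh f : S × A → S} (s₀ : S) {Lθ Lπ Lf : ℝ}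
  (hπ : Differentiable 𝕜 π) (hfh : Differentiable 𝕜 fh) (hf : Differentiable 𝕜 f)
  (hπθ : ∀ p : Θ × S, ‖fderiv 𝕜 (fun θ : Θ => π (θ, p.2)) p.1‖ ≤ Lθ)
  (hπs : ∀ p : Θ × S, ‖fderiv 𝕜 (fun s : S => π (p.1, s)) p.2‖ ≤ Lπ)
include hπ hfh hf hπθ hπs

theorem norm_fderiv_aHat_sub_le (i : ℕ) (θ : Θ) :
    ‖fderiv 𝕜 (aHat π fh s₀ i) θ - fderiv 𝕜 (aHat π f s₀ i) θ‖ ≤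
      2 * Lθ + 2 * Lπ * ‖fderiv 𝕜 (sHat π fh s₀ i) θ‖ +
        Lπ * ‖fderiv 𝕜 (sHat π fh s₀ i) θ - fderiv 𝕜 (sHat π f s₀ i) θ‖ := by
  rw [fderiv_aHat s₀ hπ hfh, fderiv_aHat s₀ hπ hf, add_sub_add_comm]
  set ŝ := sHat π fh s₀ i θ
  set s := sHat π f s₀ i θ
  have hθ := norm_sub_le_of_le (hπθ (θ, ŝ)) (hπθ (θ, s))
  have hs := norm_sub_le_of_le (hπs (θ, ŝ)) (hπs (θ, s))
  calc _ ≤ _ := norm_add_le _ _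
    _ ≤ _ := add_le_add hθ (ContinuousLinearMap.norm_comp_sub_comp_le _ _ _ _)
    _ ≤ (Lθ + Lθ) + ((Lπ + Lπ) * ‖fderiv 𝕜 (sHat π fh s₀ i) θ‖ +
          Lπ * ‖fderiv 𝕜 (sHat π fh s₀ i) θ - fderiv 𝕜 (sHat π f s₀ i) θ‖) := by
      gcongr
      exact hπs (θ, s)
    _ = _ := by ring

variable (hfs : ∀ p : S × A, ‖fderiv 𝕜 (fun s : S => f (s, p.2)) p.1‖ ≤ Lf)
  (hfa : ∀ p : S × A, ‖fderiv 𝕜 (fun a : A => f (p.1, a)) p.2‖ ≤ Lf)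
include hfs hfa

theorem norm_fderiv_sHat_sub_succ_le {K ε : ℝ} (i : ℕ) (θ : Θ)
    (hŝ : ‖fderiv 𝕜 (sHat π fh s₀ i) θ‖ ≤ K) (hâ : ‖fderiv 𝕜 (aHat π fh s₀ i) θ‖ ≤ K)
    (herr : ‖fderiv 𝕜 (fun s : S => fh (s, aHat π fh s₀ i θ)) (sHat π fh s₀ i θ) -
          fderiv 𝕜 (fun s : S => f (s, aHat π f s₀ i θ)) (sHat π f s₀ i θ)‖ +
        ‖fderiv 𝕜 (fun a : A => fh (sHat π fh s₀ i θ, a)) (aHat π fh s₀ i θ) -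
          fderiv 𝕜 (fun a : A => f (sHat π f s₀ i θ, a)) (aHat π f s₀ i θ)‖ ≤ ε) :
    ‖fderiv 𝕜 (sHat π fh s₀ (i + 1)) θ - fderiv 𝕜 (sHat π f s₀ (i + 1)) θ‖ ≤
      Lf * (1 + Lπ) * ‖fderiv 𝕜 (sHat π fh s₀ i) θ - fderiv 𝕜 (sHat π f s₀ i) θ‖ +
        ((ε + 2 * Lf * Lπ) * K + 2 * Lf * Lθ) := by
  have hΔa := norm_fderiv_aHat_sub_le s₀ hπ hfh hf hπθ hπs i θ
  have hK : 0 ≤ K := (norm_nonneg _).trans hŝ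
  have hLf : 0 ≤ Lf := (norm_nonneg _).trans (hfs 0)
  have hLπ : 0 ≤ Lπ := (norm_nonneg _).trans (hπs 0)
  rw [fderiv_sHat_succ s₀ hπ hfh, fderiv_sHat_succ s₀ hπ hf, add_sub_add_comm]
  set ŝ := sHat π fh s₀ i θ
  set s := sHat π f s₀ i θ
  set â := aHat π fh s₀ i θ
  set a := aHat π f s₀ i θ
  set Δs := fderiv 𝕜 (sHat π fh s₀ i) θ - fderiv 𝕜 (sHat π f s₀ i) θ
  set εs := ‖fderiv 𝕜 (fun s => fh (s, â)) ŝ - fderiv 𝕜 (fun s => f (s, a)) s‖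
  set εa := ‖fderiv 𝕜 (fun a => fh (ŝ, a)) â - fderiv 𝕜 (fun a => f (s, a)) a‖
  calc _ ≤ _ := norm_add_le _ _
    _ ≤ _ := add_le_add (ContinuousLinearMap.norm_comp_sub_comp_le _ _ _ _)
        (ContinuousLinearMap.norm_comp_sub_comp_le _ _ _ _)
    _ ≤ (εs * K + Lf * ‖Δs‖) + (εa * K + Lf * (2 * Lθ + 2 * Lπ * K + Lπ * ‖Δs‖)) := by
      gcongr
      · exact hfs (s, a)
      · exact hfa (s, a)
      · exact hΔa.trans (by gcongr)
    _ = (εs + εa) * K + Lf * (1 + Lπ) * ‖Δs‖ + (2 * Lf * Lπ * K + 2 * Lf * Lθ) := by ring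
    _ ≤ ε * K + Lf * (1 + Lπ) * ‖Δs‖ + (2 * Lf * Lπ * K + 2 * Lf * Lθ) := by gcongr
    _ = _ := by ring

end RolloutComparison

theorem stmt7_general {Θ S A : Type*}
    [NormedAddCommGroup Θ] [NormedSpace ℝ Θ]
    [NormedAddCommGroup S] [NormedSpace ℝ S]
    [NormedAddCommGroup A] [NormedSpace ℝ A]
    (π : Θ × S → A) (fh f : S × A → S) (s₀ : S)
    (Lθ Lπ Lfh Lf εf : ℝ)
    (hπdiff : Differentiable ℝ π)
    (hπθ : ∀ p : Θ × S, ‖fderiv ℝ (fun θ : Θ => π (θ, p.2)) p.1‖ ≤ Lθ)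
    (hπs : ∀ p : Θ × S, ‖fderiv ℝ (fun s : S => π (p.1, s)) p.2‖ ≤ Lπ)
    (hfhdiff : Differentiable ℝ fh)
    (hfhs : ∀ p : S × A, ‖fderiv ℝ (fun s : S => fh (s, p.2)) p.1‖ ≤ Lfh)
    (hfha : ∀ p : S × A, ‖fderiv ℝ (fun a : A => fh (p.1, a)) p.2‖ ≤ Lfh)
    (hfdiff : Differentiable ℝ f)
    (hfs : ∀ p : S × A, ‖fderiv ℝ (fun s : S => f (s, p.2)) p.1‖ ≤ Lf)
    (hfa : ∀ p : S × A, ‖fderiv ℝ (fun a : A => f (p.1, a)) p.2‖ ≤ Lf)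
    (hmodelerr : ∀ i : ℕ, 1 ≤ i → ∀ θ : Θ,
      ‖fderiv ℝ (fun s : S => fh (s, aHat π fh s₀ (i - 1) θ)) (sHat π fh s₀ (i - 1) θ) -
          fderiv ℝ (fun s : S => f (s, aHat π f s₀ (i - 1) θ)) (sHat π f s₀ (i - 1) θ)‖ +
        ‖fderiv ℝ (fun a : A => fh (sHat π fh s₀ (i - 1) θ, a)) (aHat π fh s₀ (i - 1) θ) -
          fderiv ℝ (fun a : A => f (sHat π f s₀ (i - 1) θ, a)) (aHat π f s₀ (i - 1) θ)‖ ≤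
        εf) :
    ∀ i : ℕ, 1 ≤ i → ∀ θ : Θ,
      ‖fderiv ℝ (sHat π fh s₀ i) θ - fderiv ℝ (sHat π f s₀ i) θ‖ ≤
        ((εf + 2 * Lf * Lπ) * Khat Lπ Lfh Lθ (i - 1) + 2 * Lf * Lθ) *
          ∑ j ∈ Finset.range i, (Lf * (1 + Lπ)) ^ j := by
  have hLθ : 0 ≤ Lθ := (norm_nonneg _).trans (hπθ 0)
  have hLπ : 0 ≤ Lπ := (norm_nonneg _).trans (hπs 0)
  have hLfh : 0 ≤ Lfh := (norm_nonneg _).trans (hfhs 0)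
  have hLf : 0 ≤ Lf := (norm_nonneg _).trans (hfs 0)
  have hεf : 0 ≤ εf := (add_nonneg (norm_nonneg _) (norm_nonneg _)).trans (hmodelerr 1 le_rfl 0)
  have hC : Monotone fun n => (εf + 2 * Lf * Lπ) * Khat Lπ Lfh Lθ n + 2 * Lf * Lθ :=
    fun m n hmn => by beta_reduce; gcongr; exact monotone_Khat (by linarith) hLfh hLθ hmn
  intro i _ θ
  refine le_mul_geom_sum_of_le_mul_add
    (d := fun i => ‖fderiv ℝ (sHat π fh s₀ i) θ - fderiv ℝ (sHat π f s₀ i) θ‖)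
    (by positivity) hC (by simp [fderiv_sHat_zero]) (fun n => ?_) i
  exact norm_fderiv_sHat_sub_succ_le s₀ hπdiff hfhdiff hfdiff hπθ hπs hfs hfa n θ
    (norm_fderiv_sHat_le_Khat s₀ hπdiff hfhdiff hπθ hπs hfhs hfha n θ)
    (norm_fderiv_aHat_le_Khat s₀ hπdiff hfhdiff hπθ hπs hfhs hfha n θ)
    (by simpa using hmodelerr (n + 1) (by omega) θ)

/-- **Derivative-bias propagation, state part** (equation (35)). Comparing the model
rollout (dynamics `f̂`, Lipschitz `L_f̂`) with the true rollout (dynamics `f`, Lipschitz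
`L_f`) from the same initial state: if `ε_f` bounds the sum of the partial-derivative
errors of the model along the rollouts, then for `i ≥ 1`,
`‖D_θ ŝ_i(θ) − D_θ s_i(θ)‖ ≤ ((ε_f + 2 L_f L_π) K̂(i−1) + 2 L_f L_θ) ∑_{j<i} M_f^j`,
`M_f = L_f (1 + L_π)`. -/
theorem stmt7 {Θ S A : Type*}
    [NormedAddCommGroup Θ] [NormedSpace ℝ Θ]
    [NormedAddCommGroup S] [NormedSpace ℝ S]
    [NormedAddCommGroup A] [NormedSpace ℝ A]
    (π : Θ × S → A) (fh f : S × A → S) (s₀ : S)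
    (Lθ Lπ Lfh Lf εf : ℝ) (hεf : 0 ≤ εf)
    (hπdiff : Differentiable ℝ π)
    (hπθ : ∀ p : Θ × S, ‖fderiv ℝ (fun θ : Θ => π (θ, p.2)) p.1‖ ≤ Lθ)
    (hπs : ∀ p : Θ × S, ‖fderiv ℝ (fun s : S => π (p.1, s)) p.2‖ ≤ Lπ)
    (hfhdiff : Differentiable ℝ fh)
    (hfhs : ∀ p : S × A, ‖fderiv ℝ (fun s : S => fh (s, p.2)) p.1‖ ≤ Lfh)
    (hfha : ∀ p : S × A, ‖fderiv ℝ (fun a : A => fh (p.1, a)) p.2‖ ≤ Lfh)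
    (hfdiff : Differentiable ℝ f)
    (hfs : ∀ p : S × A, ‖fderiv ℝ (fun s : S => f (s, p.2)) p.1‖ ≤ Lf)
    (hfa : ∀ p : S × A, ‖fderiv ℝ (fun a : A => f (p.1, a)) p.2‖ ≤ Lf)
    (hmodelerr : ∀ i : ℕ, 1 ≤ i → ∀ θ : Θ,
      ‖fderiv ℝ (fun s : S => fh (s, aHat π fh s₀ (i - 1) θ)) (sHat π fh s₀ (i - 1) θ) -
          fderiv ℝ (fun s : S => f (s, aHat π f s₀ (i - 1) θ)) (sHat π f s₀ (i - 1) θ)‖ +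
        ‖fderiv ℝ (fun a : A => fh (sHat π fh s₀ (i - 1) θ, a)) (aHat π fh s₀ (i - 1) θ) -
          fderiv ℝ (fun a : A => f (sHat π f s₀ (i - 1) θ, a)) (aHat π f s₀ (i - 1) θ)‖ ≤
        εf) :
    ∀ i : ℕ, 1 ≤ i → ∀ θ : Θ,
      ‖fderiv ℝ (sHat π fh s₀ i) θ - fderiv ℝ (sHat π f s₀ i) θ‖ ≤
        ((εf + 2 * Lf * Lπ) * Khat Lπ Lfh Lθ (i - 1) + 2 * Lf * Lθ) *
          ∑ j ∈ Finset.range i, (Lf * (1 + Lπ)) ^ j :=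
  stmt7_general π fh f s₀ Lθ Lπ Lfh Lf εf hπdiff hπθ hπs hfhdiff hfhs hfha hfdiff hfs hfa hmodelerr
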